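/- Let ρ₀ and ρ₁ be density matrices with ρ₀ positive definite. Define ψ(r) = log Tr(ρ₁^{1+r} ρ₀^{-r}) for r ∈ [0,1]. Then ψ(0) = 0, ψ is differentiable on [0,1], and ψ'(0) = D(ρ₁‖ρ₀) = Tr(ρ₁(log ρ₁ − log ρ₀)). Moreover ψ'(r) = Tr(ρ₀^{-r} ρ₁^{1+r}(log ρ₁ − log ρ₀)) / Tr(ρ₁^{1+r} ρ₀^{-r}). -/

import Mathlib

open Matrix
open scoped ComplexOrder

variable {d : Type*} [Fintype d] [DecidableEq d]

open Classical in
/-- Functional calculus for Hermitian matrices: apply `f` to the eigenvalues.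
Returns `0` if the matrix is not Hermitian. -/
noncomputable def mfun (f : ℝ → ℝ) (A : Matrix d d ℂ) : Matrix d d ℂ :=
  if hA : A.IsHermitian then
    (hA.eigenvectorUnitary : Matrix d d ℂ) *
      Matrix.diagonal (fun i => (f (hA.eigenvalues i) : ℂ)) *
      star (hA.eigenvectorUnitary : Matrix d d ℂ)
  else 0

/-- Matrix logarithm on the support (eigenvalues `≤ 0` are mapped to `0`). -/
noncomputable def logm (A : Matrix d d ℂ) : Matrix d d ℂ :=
  mfun (fun x => if x ≤ 0 then 0 else Real.log x) A

/-- Matrix real power on the support (eigenvalues `≤ 0` are mapped to `0`). -/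
noncomputable def powm (A : Matrix d d ℂ) (p : ℝ) : Matrix d d ℂ :=
  mfun (fun x => if x ≤ 0 then 0 else x ^ p) A

/-- Quantum relative entropy `D(ρ‖σ) = Tr(ρ (log ρ − log σ))` (natural log). -/
noncomputable def qRelEnt (ρ σ : Matrix d d ℂ) : ℝ :=
  ((ρ * (logm ρ - logm σ)).trace).re

/-- The support of `ρ` is contained in the support of `σ` (kernel containment,
equivalent to range containment for Hermitian matrices). -/
def SuppSubset (ρ σ : Matrix d d ℂ) : Prop :=
  ∀ v : d → ℂ, σ.mulVec v = 0 → ρ.mulVec v = 0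

/-- Trace norm of a Hermitian matrix: `Tr |A|`. -/
noncomputable def traceNorm (A : Matrix d d ℂ) : ℝ :=
  ((mfun (fun x => |x|) A).trace).re

/-!
Diagonalise `ρ₁ = U diag(μ) U*` and `ρ₀ = V diag(λ) V*`. Then
`Tr(f(ρ₁) g(ρ₀)) = ∑ᵢⱼ f(μᵢ) g(λⱼ) cᵢⱼ` with `cᵢⱼ = |(U*V)ᵢⱼ|² ≥ 0` and `∑ⱼ cᵢⱼ = 1`, so
`Tr(ρ₁^{1+r} ρ₀^{-r})` is a nonnegative combination of the exponentials `μᵢ^{1+r} λⱼ^{-r}`; it is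
positive because some `μᵢ > 0`, and it can be differentiated term by term. The termwise derivative
is reassembled into `Tr(ρ₀^{-r} ρ₁^{1+r} (log ρ₁ - log ρ₀))` by the functional calculus and
cyclicity of the trace. At `r = 0` we have `ρ₁^1 = ρ₁` and `ρ₀^0 = 1`, which gives `ψ(0) = 0` and
`ψ'(0) = D(ρ₁‖ρ₀)`.
-/

lemma mfun_of_isHermitian {A : Matrix d d ℂ} (hA : A.IsHermitian) (f : ℝ → ℝ) :
    mfun f A = (hA.eigenvectorUnitary : Matrix d d ℂ) *
      diagonal (fun i => (f (hA.eigenvalues i) : ℂ)) *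
      star (hA.eigenvectorUnitary : Matrix d d ℂ) :=
  dif_pos hA

lemma mfun_congr {A : Matrix d d ℂ} (hA : A.IsHermitian) {f g : ℝ → ℝ}
    (h : ∀ i, f (hA.eigenvalues i) = g (hA.eigenvalues i)) : mfun f A = mfun g A := by
  simp only [mfun_of_isHermitian hA, h]

lemma mfun_id {A : Matrix d d ℂ} (hA : A.IsHermitian) : mfun (fun x => x) A = A :=
  (mfun_of_isHermitian hA _).trans hA.spectral_theorem.symm

lemma mfun_one {A : Matrix d d ℂ} (hA : A.IsHermitian) : mfun (fun _ => 1) A = 1 := by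
  simp [mfun_of_isHermitian hA]

lemma mfun_neg (f : ℝ → ℝ) (A : Matrix d d ℂ) : mfun (fun x => -f x) A = -mfun f A := by
  by_cases hA : A.IsHermitian
  · simp [mfun_of_isHermitian hA, ← diagonal_neg]
  · simp [mfun, hA]

lemma mfun_mul_mfun (f g : ℝ → ℝ) (A : Matrix d d ℂ) :
    mfun f A * mfun g A = mfun (fun x => f x * g x) A := by
  by_cases hA : A.IsHermitian
  · simp only [mfun_of_isHermitian hA, Complex.ofReal_mul, ← diagonal_mul_diagonal, mul_assoc,
      ← mul_assoc (star _) (hA.eigenvectorUnitary : Matrix d d ℂ),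
      Unitary.coe_star_mul_self, one_mul]
  · simp [mfun, hA]

section Overlap

variable {A B : Matrix d d ℂ}

noncomputable def eigenOverlap (hA : A.IsHermitian) (hB : B.IsHermitian) (i j : d) : ℝ :=
  Complex.normSq ((star (hA.eigenvectorUnitary : Matrix d d ℂ) *
    (hB.eigenvectorUnitary : Matrix d d ℂ)) i j)

lemma eigenOverlap_nonneg (hA : A.IsHermitian) (hB : B.IsHermitian) (i j : d) :
    0 ≤ eigenOverlap hA hB i j :=
  Complex.normSq_nonneg _

lemma sum_eigenOverlap (hA : A.IsHermitian) (hB : B.IsHermitian) (i : d) :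
    ∑ j, eigenOverlap hA hB i j = 1 := by
  have hW := congr_fun₂ (Unitary.coe_mul_star_self
    (star hA.eigenvectorUnitary * hB.eigenvectorUnitary)) i i
  simp only [mul_apply, one_apply_eq, Unitary.coe_star, star_apply, RCLike.star_def,
    Complex.mul_conj] at hW
  exact_mod_cast hW

lemma trace_mfun_mul_mfun (hA : A.IsHermitian) (hB : B.IsHermitian) (f g : ℝ → ℝ) :
    (mfun f A * mfun g B).trace =
      ((∑ i, ∑ j, f (hA.eigenvalues i) * g (hB.eigenvalues j) * eigenOverlap hA hB i j : ℝ) :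
        ℂ) := by
  set W := star (hA.eigenvectorUnitary : Matrix d d ℂ) * (hB.eigenvectorUnitary : Matrix d d ℂ)
  have hcycle : (mfun f A * mfun g B).trace =
      (diagonal (fun i => (f (hA.eigenvalues i) : ℂ)) * W *
        diagonal (fun j => (g (hB.eigenvalues j) : ℂ)) * star W).trace := by
    simp only [mfun_of_isHermitian hA, mfun_of_isHermitian hB, W, star_mul, star_star, mul_assoc]
    rw [trace_mul_comm]
    simp only [mul_assoc]
  rw [hcycle]
  push_cast
  refine Finset.sum_congr rfl fun i _ => ?_
  rw [diag_apply, mul_apply]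
  refine Finset.sum_congr rfl fun j _ => ?_
  rw [mul_diagonal, diagonal_mul, star_apply, RCLike.star_def, eigenOverlap, ← Complex.mul_conj]
  ring

end Overlap

lemma hasDerivAt_re_trace_mfun_mul_mfun {A B : Matrix d d ℂ} (hA : A.IsHermitian)
    (hB : B.IsHermitian) {f g : ℝ → ℝ → ℝ} {f' g' : ℝ → ℝ} {r : ℝ}
    (hf : ∀ x, HasDerivAt (fun s => f s x) (f' x) r)
    (hg : ∀ x, HasDerivAt (fun s => g s x) (g' x) r) :
    HasDerivAt (fun s => (mfun (f s) A * mfun (g s) B).trace.re)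
      ((mfun f' A * mfun (g r) B).trace.re + (mfun (f r) A * mfun g' B).trace.re) r := by
  simp only [trace_mfun_mul_mfun hA hB, Complex.ofReal_re, ← Finset.sum_add_distrib]
  refine HasDerivAt.fun_sum fun i _ => HasDerivAt.fun_sum fun j _ => ?_
  exact (((hf _).fun_mul (hg _)).mul_const (eigenOverlap hA hB i j)).congr_deriv (by ring)

lemma re_trace_mfun_mul_mfun_pos {A B : Matrix d d ℂ} (hA : A.IsHermitian)
    (hB : B.IsHermitian) {f g : ℝ → ℝ} (hf : ∀ i, 0 ≤ f (hA.eigenvalues i))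
    (hg : ∀ j, 0 < g (hB.eigenvalues j)) (hfpos : ∃ i, 0 < f (hA.eigenvalues i)) :
    0 < (mfun f A * mfun g B).trace.re := by
  obtain ⟨i, hi⟩ := hfpos
  obtain ⟨j, -, hj⟩ := Finset.exists_ne_zero_of_sum_ne_zero
    ((sum_eigenOverlap hA hB i).trans_ne one_ne_zero)
  have hterm_nonneg : ∀ i j, 0 ≤ f (hA.eigenvalues i) * g (hB.eigenvalues j) *
      eigenOverlap hA hB i j := fun i j =>
    mul_nonneg (mul_nonneg (hf i) (hg j).le) (eigenOverlap_nonneg hA hB i j)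
  rw [trace_mfun_mul_mfun hA hB, Complex.ofReal_re]
  refine Finset.sum_pos' (fun i _ => Finset.sum_nonneg fun j _ => hterm_nonneg i j)
    ⟨i, Finset.mem_univ _, Finset.sum_pos' (fun j _ => hterm_nonneg i j) ⟨j, Finset.mem_univ _, ?_⟩⟩
  exact mul_pos (mul_pos hi (hg j)) ((eigenOverlap_nonneg hA hB i j).lt_of_ne' hj)

lemma Matrix.PosSemidef.exists_eigenvalues_pos {A : Matrix d d ℂ} (hA : A.PosSemidef)
    (hA0 : A ≠ 0) : ∃ i, 0 < hA.isHermitian.eigenvalues i := by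
  by_contra! h
  exact hA0 (hA.isHermitian.eigenvalues_eq_zero_iff.mp
    (funext fun i => (h i).antisymm (hA.eigenvalues_nonneg i)))

noncomputable def posRpow (x p : ℝ) : ℝ := if x ≤ 0 then 0 else x ^ p

lemma posRpow_nonneg (x p : ℝ) : 0 ≤ posRpow x p := by
  unfold posRpow
  split_ifs with hx
  exacts [le_rfl, Real.rpow_nonneg (not_le.mp hx).le p]

lemma posRpow_pos {x : ℝ} (hx : 0 < x) (p : ℝ) : 0 < posRpow x p := by
  simpa [posRpow, hx.not_ge] using Real.rpow_pos_of_pos hx p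

lemma hasDerivAt_posRpow (x : ℝ) {p : ℝ → ℝ} {p' r : ℝ} (hp : HasDerivAt p p' r) :
    HasDerivAt (fun s => posRpow x (p s))
      (posRpow x (p r) * (if x ≤ 0 then 0 else Real.log x) * p') r := by
  by_cases hx : x ≤ 0
  · simpa [posRpow, hx] using hasDerivAt_const r (0 : ℝ)
  · simp only [posRpow, if_neg hx]
    convert hp.const_rpow (not_le.mp hx) using 1
    ring

lemma powm_eq_mfun_posRpow (A : Matrix d d ℂ) (p : ℝ) :
    powm A p = mfun (fun x => posRpow x p) A :=
  rfl

lemma powm_one {A : Matrix d d ℂ} (hA : A.PosSemidef) : powm A 1 = A := by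
  rw [powm_eq_mfun_posRpow, mfun_congr hA.isHermitian (g := fun x => x), mfun_id hA.isHermitian]
  intro i
  rcases (hA.eigenvalues_nonneg i).eq_or_lt with h | h
  · simp [posRpow, ← h]
  · simp [posRpow, h.not_ge]

lemma powm_zero {A : Matrix d d ℂ} (hA : A.PosDef) : powm A 0 = 1 := by
  rw [powm_eq_mfun_posRpow, mfun_congr hA.isHermitian (g := fun _ => 1), mfun_one hA.isHermitian]
  intro i
  simp [posRpow, (hA.eigenvalues_pos i).not_ge]

lemma trace_powm_mul_powm_mul_logm_sub (A B : Matrix d d ℂ) (p q : ℝ) :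
    (powm B q * powm A p * (logm A - logm B)).trace =
      (mfun (fun x => posRpow x p * (if x ≤ 0 then 0 else Real.log x)) A * powm B q).trace +
      (powm A p * mfun (fun x => -(posRpow x q * (if x ≤ 0 then 0 else Real.log x))) B).trace := by
  have hA : mfun (fun x => posRpow x p * (if x ≤ 0 then 0 else Real.log x)) A =
      powm A p * logm A :=
    (mfun_mul_mfun _ _ A).symm
  have hB : mfun (fun x => -(posRpow x q * (if x ≤ 0 then 0 else Real.log x))) B =
      -(logm B * powm B q) := by
    rw [mfun_neg, logm, powm_eq_mfun_posRpow, mfun_mul_mfun]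
    simp only [mul_comm]
  rw [hA, hB, mul_sub, trace_sub, mul_neg, trace_neg, ← sub_eq_add_neg,
    mul_assoc (powm B q), trace_mul_comm (powm B q) (powm A p * logm A),
    trace_mul_cycle (powm B q), trace_mul_comm (logm B * powm B q)]

theorem deriv_renyi_like_psi_general (ρ₀ ρ₁ : Matrix d d ℂ)
    (h₀ : ρ₀.PosDef)
    (h₁ : ρ₁.PosSemidef) (h₁1 : ρ₁.trace = 1) :
    (fun r : ℝ => Real.log (((powm ρ₁ (1 + r) * powm ρ₀ (-r)).trace).re)) 0 = 0 ∧
    (∀ r ∈ Set.Icc (0 : ℝ) 1,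
      HasDerivAt (fun r : ℝ => Real.log (((powm ρ₁ (1 + r) * powm ρ₀ (-r)).trace).re))
        (((powm ρ₀ (-r) * powm ρ₁ (1 + r) * (logm ρ₁ - logm ρ₀)).trace).re /
          ((powm ρ₁ (1 + r) * powm ρ₀ (-r)).trace).re) r) ∧
    ((powm ρ₀ (-(0 : ℝ)) * powm ρ₁ (1 + 0) * (logm ρ₁ - logm ρ₀)).trace).re /
        ((powm ρ₁ ((1 : ℝ) + 0) * powm ρ₀ (-(0 : ℝ))).trace).re
      = qRelEnt ρ₁ ρ₀ := by
  have hpos (r : ℝ) : 0 < ((powm ρ₁ (1 + r) * powm ρ₀ (-r)).trace).re := by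
    obtain ⟨i, hi⟩ := h₁.exists_eigenvalues_pos (by rintro rfl; simp at h₁1)
    exact re_trace_mfun_mul_mfun_pos h₁.isHermitian h₀.isHermitian (fun _ => posRpow_nonneg _ _)
      (fun j => posRpow_pos (h₀.eigenvalues_pos j) _) ⟨i, posRpow_pos hi _⟩
  refine ⟨?_, fun r _ => ?_, ?_⟩
  · simp only [add_zero, neg_zero, powm_one h₁, powm_zero h₀, mul_one, h₁1, Complex.one_re,
      Real.log_one]
  · have hF := hasDerivAt_re_trace_mfun_mul_mfun h₁.isHermitian h₀.isHermitian
      (fun x => hasDerivAt_posRpow x ((hasDerivAt_id' r).const_add 1))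
      (fun x => hasDerivAt_posRpow x (hasDerivAt_id' r).neg)
    refine (hF.log (hpos r).ne').congr_deriv ?_
    simp only [trace_powm_mul_powm_mul_logm_sub, Complex.add_re, mul_one, mul_neg_one]
    rfl
  · simp only [neg_zero, add_zero, powm_zero h₀, powm_one h₁, one_mul, mul_one, h₁1,
      Complex.one_re, div_one, qRelEnt]

/-- For density matrices `ρ₀` (positive definite) and `ρ₁`, the function
`ψ(r) = log Tr(ρ₁^{1+r} ρ₀^{-r})` satisfies `ψ(0) = 0`, is differentiable on `[0,1]` with
`ψ'(r) = Tr(ρ₀^{-r} ρ₁^{1+r}(log ρ₁ − log ρ₀)) / Tr(ρ₁^{1+r} ρ₀^{-r})`,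
and `ψ'(0) = D(ρ₁‖ρ₀)`. -/
theorem deriv_renyi_like_psi (ρ₀ ρ₁ : Matrix d d ℂ)
    (h₀ : ρ₀.PosDef) (h₀1 : ρ₀.trace = 1)
    (h₁ : ρ₁.PosSemidef) (h₁1 : ρ₁.trace = 1) :
    (fun r : ℝ => Real.log (((powm ρ₁ (1 + r) * powm ρ₀ (-r)).trace).re)) 0 = 0 ∧
    (∀ r ∈ Set.Icc (0 : ℝ) 1,
      HasDerivAt (fun r : ℝ => Real.log (((powm ρ₁ (1 + r) * powm ρ₀ (-r)).trace).re))
        (((powm ρ₀ (-r) * powm ρ₁ (1 + r) * (logm ρ₁ - logm ρ₀)).trace).re /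
          ((powm ρ₁ (1 + r) * powm ρ₀ (-r)).trace).re) r) ∧
    ((powm ρ₀ (-(0 : ℝ)) * powm ρ₁ (1 + 0) * (logm ρ₁ - logm ρ₀)).trace).re /
        ((powm ρ₁ ((1 : ℝ) + 0) * powm ρ₀ (-(0 : ℝ))).trace).re
      = qRelEnt ρ₁ ρ₀ :=
  deriv_renyi_like_psi_general ρ₀ ρ₁ h₀ h₁ h₁1
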